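/- Let ε ∈ ℝ and consider the pseudo-Kahan–Hirota–Kimura map of the isochronous quadratic system S₂ (ẋ = −y + x², ẏ = x(1+y)), given explicitly by Φ̃_{2,ε}(x,y) = ( ((ε²−1)x + 2εy)/E(x,y), (−2εx + (ε²−1)y)/E(x,y) ) with E(x,y) = 2εx − 2ε²y − ε² − 1. Then: (i) H₂(x,y) = (x² + y²)/(1+y)² is a first integral of Φ̃_{2,ε}: H₂(Φ̃_{2,ε}(x,y)) = H₂(x,y) for every (x,y) with E(x,y) ≠ 0, y ≠ −1, and the second component of Φ̃_{2,ε}(x,y) different from −1; and (ii) the vector field X₂(x,y) = (−y + x², x(1+y)) is a Lie symmetry of Φ̃_{2,ε}: X₂(Φ̃_{2,ε}(x,y)) = JΦ̃_{2,ε}(x,y)·X₂(x,y) for every (x,y) with E(x,y) ≠ 0, where JΦ̃_{2,ε} is the Jacobian matrix of Φ̃_{2,ε}. -/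

import Mathlib

/-- Denominator of the pseudo-KHK map `Φ̃_{2,ε}` of the isochronous quadratic
system `S₂`: `ẋ = -y + x²`, `ẏ = x(1+y)`. -/
noncomputable def E2 (ε : ℝ) (q : ℝ × ℝ) : ℝ := 2 * ε * q.1 - 2 * ε ^ 2 * q.2 - ε ^ 2 - 1

/-- The pseudo-Kahan–Hirota–Kimura map `Φ̃_{2,ε}` of the system `S₂`. -/
noncomputable def Phit2 (ε : ℝ) (q : ℝ × ℝ) : ℝ × ℝ :=
  (((ε ^ 2 - 1) * q.1 + 2 * ε * q.2) / E2 ε q,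
   (-2 * ε * q.1 + (ε ^ 2 - 1) * q.2) / E2 ε q)

/-- First integral `H₂(x,y) = (x²+y²)/(1+y)²` of the isochronous system `S₂`. -/
noncomputable def H2 (q : ℝ × ℝ) : ℝ := (q.1 ^ 2 + q.2 ^ 2) / (1 + q.2) ^ 2

/-- The isochronous quadratic vector field `S₂`: `X₂(x,y) = (-y + x², x(1+y))`. -/
noncomputable def X2 (q : ℝ × ℝ) : ℝ × ℝ := (-q.2 + q.1 ^ 2, q.1 * (1 + q.2))

/-!
The linear part of `Φ̃_{2,ε}` is `(ε² + 1)` times a rotation, so `Φ̃_{2,ε}(q) = (ε² + 1) R q / E(q)`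
scales `x² + y²` by `((ε² + 1) / E)²`; the map also sends `1 + y` to `-(ε² + 1)(1 + y) / E`,
so both numerator and denominator of `H₂` pick up the same factor. For the Lie symmetry,
`Φ̃_{2,ε} = E⁻¹ • L` with `L` linear and `E` affine, whose derivative is explicit; the identity
`X₂ ∘ Φ̃_{2,ε} = DΦ̃_{2,ε} · X₂` is then a rational-function identity.
-/

open ContinuousLinearMap

theorem HasFDerivAt.inv_smul {𝕜 E F : Type*} [NontriviallyNormedField 𝕜]
    [NormedAddCommGroup E] [NormedSpace 𝕜 E] [NormedAddCommGroup F] [NormedSpace 𝕜 F]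
    {c : E → 𝕜} {c' : E →L[𝕜] 𝕜} {f : E → F} {f' : E →L[𝕜] F} {x : E}
    (hc : HasFDerivAt c c' x) (hf : HasFDerivAt f f' x) (hx : c x ≠ 0) :
    HasFDerivAt (fun y => (c y)⁻¹ • f y)
      ((c x)⁻¹ • f' - ((c x ^ 2)⁻¹ • c').smulRight (f x)) x := by
  refine (((hasFDerivAt_inv hx).comp x hc).smul hf).congr_fderiv ?_
  ext v
  simp [sub_eq_add_neg, mul_comm]

namespace KHK

variable (ε : ℝ)

noncomputable def phit2Linear : ℝ × ℝ →L[ℝ] ℝ × ℝ :=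
  ((ε ^ 2 - 1) • fst ℝ ℝ ℝ + (2 * ε) • snd ℝ ℝ ℝ).prod
    ((-2 * ε) • fst ℝ ℝ ℝ + (ε ^ 2 - 1) • snd ℝ ℝ ℝ)

theorem Phit2_eq_inv_smul (q : ℝ × ℝ) : Phit2 ε q = (E2 ε q)⁻¹ • phit2Linear ε q := by
  ext <;> simp [Phit2, phit2Linear, div_eq_inv_mul]

theorem hasFDerivAt_E2 (q : ℝ × ℝ) :
    HasFDerivAt (E2 ε) ((2 * ε) • fst ℝ ℝ ℝ - (2 * ε ^ 2) • snd ℝ ℝ ℝ) q :=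
  ((((hasFDerivAt_fst.const_mul (2 * ε)).sub (hasFDerivAt_snd.const_mul (2 * ε ^ 2))).sub_const
    (ε ^ 2)).sub_const 1)

theorem hasFDerivAt_Phit2 {q : ℝ × ℝ} (hE : E2 ε q ≠ 0) :
    HasFDerivAt (Phit2 ε)
      ((E2 ε q)⁻¹ • phit2Linear ε - ((E2 ε q ^ 2)⁻¹ •
        ((2 * ε) • fst ℝ ℝ ℝ - (2 * ε ^ 2) • snd ℝ ℝ ℝ)).smulRight (phit2Linear ε q)) q := by
  rw [show Phit2 ε = fun q => (E2 ε q)⁻¹ • phit2Linear ε q from funext (Phit2_eq_inv_smul ε)]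
  exact (hasFDerivAt_E2 ε q).inv_smul (phit2Linear ε).hasFDerivAt hE

theorem X2_Phit2 {q : ℝ × ℝ} (hE : E2 ε q ≠ 0) :
    X2 (Phit2 ε q) = fderiv ℝ (Phit2 ε) q (X2 q) := by
  rw [(hasFDerivAt_Phit2 ε hE).fderiv, Phit2_eq_inv_smul]
  ext
  all_goals
    simp only [X2, phit2Linear, neg_mul, ContinuousLinearMap.prod_apply, add_apply, smul_apply,
      coe_fst', coe_snd', smul_eq_mul, Prod.smul_mk, sub_apply, smulRight_apply, Prod.mk_sub_mk]
    field_simp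
    simp only [E2]
    ring

theorem Phit2_normSq (q : ℝ × ℝ) :
    (Phit2 ε q).1 ^ 2 + (Phit2 ε q).2 ^ 2 = ((ε ^ 2 + 1) / E2 ε q) ^ 2 * (q.1 ^ 2 + q.2 ^ 2) := by
  simp only [Phit2]
  ring

theorem one_add_Phit2_snd {q : ℝ × ℝ} (hE : E2 ε q ≠ 0) :
    1 + (Phit2 ε q).2 = -((ε ^ 2 + 1) / E2 ε q) * (1 + q.2) := by
  simp only [Phit2]
  field_simp
  simp only [E2]
  ring

theorem H2_Phit2 {q : ℝ × ℝ} (hE : E2 ε q ≠ 0) : H2 (Phit2 ε q) = H2 q := by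
  have hscale : ((ε ^ 2 + 1) / E2 ε q) ^ 2 ≠ 0 := by positivity
  rw [H2, H2, Phit2_normSq, one_add_Phit2_snd ε hE, neg_mul, neg_sq, mul_pow]
  exact mul_div_mul_left _ _ hscale

end KHK

/-- (i) `H₂` is a first integral of the pseudo-KHK map `Φ̃_{2,ε}`, and (ii) the
vector field `X₂` of the system `S₂` is a Lie symmetry of `Φ̃_{2,ε}`:
`X₂(Φ̃_{2,ε}(p)) = JΦ̃_{2,ε}(p)·X₂(p)` wherever `E ≠ 0`. -/
theorem stmt_19 (ε : ℝ) :
    (∀ q : ℝ × ℝ, E2 ε q ≠ 0 → q.2 ≠ -1 → (Phit2 ε q).2 ≠ -1 →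
      H2 (Phit2 ε q) = H2 q) ∧
    (∀ q : ℝ × ℝ, E2 ε q ≠ 0 → X2 (Phit2 ε q) = fderiv ℝ (Phit2 ε) q (X2 q)) :=
  ⟨fun _ hE _ _ => KHK.H2_Phit2 ε hE, fun _ hE => KHK.X2_Phit2 ε hE⟩
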